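/- arXiv:1806.08497 — 2 statements merged into one kernel-verified Lean document; each statement's English description precedes it below -/
import Mathlib

section
/- Assume Conditions 1, 2, 3 and 4 (with exponent p > 4) and the jump bound, let α ∈ (0,1/2), β ∈ (0,1] satisfy (1−2α)/(1+β) ≥ 4/p, and let C and δ_n ∈ (0,1] be the constant and random variables from the discrete modulus-of-continuity theorem (so μ_n(δ_n ≤ ρ) ≤ C·ρ^β for ρ ∈ [0,1)). Then almost surely, for every n ≥ 1 and every ancestral path w: if s₁, s₂ ∈ ℤ₊/n with |s₂ − s₁| ≤ δ_n then |w⁽ⁿ⁾_{s₂} − w⁽ⁿ⁾_{s₁}| ≤ C·|s₂ − s₁|^α; and if s₁, s₂ are arbitrary reals ≥ 0 with |s₂ − s₁| ≤ δ_n then |w⁽ⁿ⁾_{s₂} − w⁽ⁿ⁾_{s₁}| ≤ C·(|s₂ − s₁|^α + n^{−α}). -/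
open MeasureTheory Filter Set

noncomputable section

/-- Points of the integer lattice `ℤ^d`. -/
abbrev ZLat (d : ℕ) := Fin d → ℤ

namespace AncestralPaper

/-- The canonical embedding of `ℤ^d` into Euclidean space `ℝ^d`. -/
def toE {d : ℕ} (x : ZLat d) : EuclideanSpace ℝ (Fin d) := WithLp.toLp 2 (fun i => ((x i : ℝ)))

/-- Euclidean distance between two lattice points. -/
def dE {d : ℕ} (x y : ZLat d) : ℝ := ‖toE x - toE y‖

/-- Properties (AR)(i) and (AR)(ii) of an ancestral relation, at a fixed sample point:
the reflexive description, the basic structural property, the root property,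
transitivity and interpolation. -/
structure ARProps {d : ℕ} (T : ℕ → Finset (ZLat d))
    (rel : ℕ → ZLat d → ℕ → ZLat d → Prop) : Prop where
  refl_iff : ∀ k x y, rel k y k x ↔ (x = y ∧ y ∈ T k)
  basic : ∀ k m x y, rel k y m x → k ≤ m ∧ y ∈ T k ∧ x ∈ T m
  zero_iff : ∀ m x, rel 0 0 m x ↔ x ∈ T m
  trans : ∀ k₁ k₂ k₃ y₁ y₂ y₃, k₁ < k₂ → k₂ < k₃ →
    rel k₁ y₁ k₂ y₂ → rel k₂ y₂ k₃ y₃ → rel k₁ y₁ k₃ y₃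
  interp : ∀ k₁ k₂ k₃ y₁ y₃, k₁ < k₂ → k₂ < k₃ → rel k₁ y₁ k₃ y₃ →
    ∃ y₂ ∈ T k₂, rel k₁ y₁ k₂ y₂ ∧ rel k₂ y₂ k₃ y₃

/-- The rescaled ancestral relation `(s,y) →ᵃ'ⁿ (t,x)`; the space points are recorded via
their *unscaled* lattice coordinates (the rescaled point is `y / √n`). -/
def relN {d : ℕ} (rel : ℕ → ZLat d → ℕ → ZLat d → Prop) (n : ℝ)
    (s : ℝ) (y : ZLat d) (t : ℝ) (x : ZLat d) : Prop :=
  rel ⌊n * s⌋₊ y ⌊n * t⌋₊ x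

open scoped ENNReal
open scoped Classical

/-- The survival event `{S⁽¹⁾ > t}`: the population is nonempty up to (real) time `t`. -/
def survives {d : ℕ} {Ω : Type*} (T : ℕ → Ω → Finset (ZLat d)) (t : ℝ) : Set Ω :=
  {ω | ∀ k : ℕ, (k : ℝ) ≤ t → (T k ω).Nonempty}

/-- An ancestral path to `(t,x)`: a function `w : [0,∞) → ℤ^d`, constant on each
interval `[k,k+1)`, with `(s,w_s) →ᵃ (s',w_{s'})` for all `0 ≤ s ≤ s' ≤ t` and
`w_s = x` for `s ≥ t`. -/
def IsAncPath {d : ℕ} (rel : ℕ → ZLat d → ℕ → ZLat d → Prop)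
    (t : ℝ) (x : ZLat d) (w : ℝ → ZLat d) : Prop :=
  (∀ (k : ℕ) (s : ℝ), (k : ℝ) ≤ s → s < (k : ℝ) + 1 → w s = w (k : ℝ)) ∧
  (∀ s s' : ℝ, 0 ≤ s → s ≤ s' → s' ≤ t → rel ⌊s⌋₊ (w s) ⌊s'⌋₊ (w s')) ∧
  (∀ s : ℝ, t ≤ s → w s = x)

lemma dE_comm {d : ℕ} (x y : ZLat d) : dE x y = dE y x := by
  unfold dE; rw [norm_sub_rev]

lemma dE_self {d : ℕ} (x : ZLat d) : dE x x = 0 := by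
  unfold dE; simp

/-- Corollary 1': with `C` and the `δ_n` furnished by the discrete
modulus-of-continuity theorem (Theorem 1'), almost surely every rescaled ancestral path
`w⁽ⁿ⁾` satisfies the same modulus of continuity. -/
theorem statement7 {d : ℕ} (hd : 1 ≤ d)
    {Ω : Type*} [mΩ : MeasurableSpace Ω] (P : Measure Ω) [IsProbabilityMeasure P]
    (F : Filtration ℕ mΩ)
    (T : ℕ → Ω → Finset (ZLat d)) (rel : Ω → ℕ → ZLat d → ℕ → ZLat d → Prop)
    (hT0 : ∀ᵐ ω ∂P, T 0 ω = {(0 : ZLat d)})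
    (hadapted : ∀ k x, MeasurableSet[F k] {ω | x ∈ T k ω})
    (hrelmeas : ∀ k m x y, MeasurableSet[F m] {ω | rel ω k y m x})
    (hAR : ∀ᵐ ω ∂P, ARProps (fun k => T k ω) (rel ω))
    -- Condition 1
    (mf : ℝ → ℝ) (sD c₁ : ℝ) (hsD : 0 < sD) (hc₁ : 1 ≤ c₁)
    (hmf_pos : ∀ t : ℝ, 0 ≤ t → 0 < mf t)
    (hmf_mono : MonotoneOn mf (Set.Ici 0))
    (hmf_top : Tendsto mf atTop atTop)
    (hsurv : Tendsto (fun t => mf t * (P (survives T t)).toReal) atTop (nhds sD))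
    (hmf_reg : ∀ s : ℝ, 0 < s → Tendsto (fun t => mf (s * t) / mf t) atTop (nhds s))
    (hmf_r1 : ∀ s n : ℝ, 1 ≤ s → 1 ≤ n → mf (s * n) / mf n ≤ c₁ * s)
    (hmf_r2 : ∀ s n : ℝ, 1 ≤ s → s ≤ n → mf n / mf (s * n) ≤ c₁ / s)
    -- Condition 2
    (c₂ : ℝ)
    (hcond2 : ∀ k : ℕ, ∫⁻ ω, ((T k ω).card : ℝ≥0∞) ∂P ≤ ENNReal.ofReal c₂)
    -- Condition 3
    (c₃ : ℝ) (hc₃ : 0 < c₃)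
    (hcond3 : ∀ k j : ℕ, 1 ≤ j → ∀ y : ZLat d, ∀ᵐ ω ∂P, y ∈ T k ω →
      (P[Set.indicator {ω' | ∃ z, rel ω' k y (k + j) z} (fun _ => (1 : ℝ)) | F k]) ω
        ≤ c₃ / mf j)
    -- Condition 4 with exponent `p > 4`
    (p : ℝ) (hp : 4 < p) (c₄ : ℝ) (hc₄ : 0 < c₄)
    (hcond4 : ∀ k j : ℕ, 0 < j → j ≤ k →
      ∫⁻ ω, (∑ x ∈ T k ω, ∑ y ∈ T (k - j) ω,
          if rel ω (k - j) y k x then ENNReal.ofReal (dE x y ^ p) else 0) ∂P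
        ≤ ENNReal.ofReal (c₄ * (j : ℝ) ^ (p / 2)))
    -- the jump bound
    (L : ℝ) (hL : 0 < L)
    (hjump : ∀ᵐ ω ∂P, ∀ (k : ℕ) (x y : ZLat d), rel ω k x (k + 1) y →
      ∀ i, |((x i - y i : ℤ) : ℝ)| ≤ L)
    -- exponents
    (α β : ℝ) (hα : α ∈ Set.Ioo (0 : ℝ) (1 / 2)) (hβ : β ∈ Set.Ioc (0 : ℝ) 1)
    (hαβ : 4 / p ≤ (1 - 2 * α) / (1 + β))
    -- the constant and random variables furnished by Theorem 1'
    (C : ℝ) (hC : 0 < C) (δ : ℝ → Ω → ℝ)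
    (hδmeas : ∀ n : ℝ, Measurable (δ n))
    (hδIoc : ∀ n : ℝ, 1 ≤ n → ∀ ω, δ n ω ∈ Set.Ioc (0 : ℝ) 1)
    (hδbound : ∀ n : ℝ, 1 ≤ n → ∀ ρ : ℝ, 0 ≤ ρ → ρ < 1 →
      mf n * (P {ω | δ n ω ≤ ρ}).toReal ≤ C * ρ ^ β)
    (hmod : ∀ n : ℝ, 1 ≤ n → ∀ᵐ ω ∂P,
      (∀ s₁ s₂ : ℝ, (∃ j : ℕ, s₁ = (j : ℝ) / n) → (∃ j : ℕ, s₂ = (j : ℝ) / n) →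
        |s₂ - s₁| ≤ δ n ω → ∀ y₁ y₂ : ZLat d, relN (rel ω) n s₁ y₁ s₂ y₂ →
        dE y₁ y₂ / Real.sqrt n ≤ C * |s₂ - s₁| ^ α) ∧
      (∀ s₁ s₂ : ℝ, 0 ≤ s₁ → 0 ≤ s₂ → |s₂ - s₁| ≤ δ n ω →
        ∀ y₁ y₂ : ZLat d, relN (rel ω) n s₁ y₁ s₂ y₂ →
        dE y₁ y₂ / Real.sqrt n ≤ C * (|s₂ - s₁| ^ α + n ^ (-α)))) :
    ∀ n : ℝ, 1 ≤ n → ∀ᵐ ω ∂P,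
      ∀ (t : ℝ) (x : ZLat d) (w : ℝ → ZLat d), 0 ≤ t → x ∈ T ⌊t⌋₊ ω →
        IsAncPath (rel ω) t x w →
        (∀ s₁ s₂ : ℝ, (∃ j : ℕ, s₁ = (j : ℝ) / n) → (∃ j : ℕ, s₂ = (j : ℝ) / n) →
          |s₂ - s₁| ≤ δ n ω →
          dE (w (n * s₂)) (w (n * s₁)) / Real.sqrt n ≤ C * |s₂ - s₁| ^ α) ∧
        (∀ s₁ s₂ : ℝ, 0 ≤ s₁ → 0 ≤ s₂ → |s₂ - s₁| ≤ δ n ω →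
          dE (w (n * s₂)) (w (n * s₁)) / Real.sqrt n ≤ C * (|s₂ - s₁| ^ α + n ^ (-α))) := by
  intro n hn
  have hn0 : (0 : ℝ) < n := lt_of_lt_of_le one_pos hn
  filter_upwards [hmod n hn] with ω hω
  intro t x w ht hx hpath
  obtain ⟨hstep, hrel, hend⟩ := hpath
  have hwt : w t = x := hend t le_rfl
  have hwfloor : w ((⌊t⌋₊ : ℝ)) = x := by
    rw [← hstep ⌊t⌋₊ t (Nat.floor_le ht) (Nat.lt_floor_add_one t), hwt]
  have hsqrt : (0 : ℝ) < Real.sqrt n := Real.sqrt_pos.2 hn0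
  -- part 1, for ordered grid times
  have key1 : ∀ s₁ s₂ : ℝ, s₁ ≤ s₂ → (∃ j : ℕ, s₁ = (j : ℝ) / n) →
      (∃ j : ℕ, s₂ = (j : ℝ) / n) → |s₂ - s₁| ≤ δ n ω →
      dE (w (n * s₂)) (w (n * s₁)) / Real.sqrt n ≤ C * |s₂ - s₁| ^ α := by
    rintro s₁ s₂ h12 ⟨j₁, rfl⟩ ⟨j₂, rfl⟩ hδ'
    have hns₁ : n * ((j₁ : ℝ) / n) = (j₁ : ℝ) := by field_simp
    have hns₂ : n * ((j₂ : ℝ) / n) = (j₂ : ℝ) := by field_simp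
    have hpos₁ : 0 ≤ n * ((j₁ : ℝ) / n) := by rw [hns₁]; exact j₁.cast_nonneg
    have hmono : n * ((j₁ : ℝ) / n) ≤ n * ((j₂ : ℝ) / n) :=
      mul_le_mul_of_nonneg_left h12 hn0.le
    by_cases hA : n * ((j₂ : ℝ) / n) ≤ t
    · have hrel' : relN (rel ω) n ((j₁ : ℝ) / n) (w (n * ((j₁ : ℝ) / n)))
          ((j₂ : ℝ) / n) (w (n * ((j₂ : ℝ) / n))) :=
        hrel _ _ hpos₁ hmono hA
      have := hω.1 _ _ ⟨j₁, rfl⟩ ⟨j₂, rfl⟩ hδ' _ _ hrel'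
      rwa [dE_comm] at this
    · push_neg at hA
      by_cases hB : n * ((j₁ : ℝ) / n) ≤ t
      · set k := ⌊t⌋₊ with hk
        have hnk : n * ((k : ℝ) / n) = (k : ℝ) := by field_simp
        have hj₁t : (j₁ : ℝ) ≤ t := by rw [← hns₁]; exact hB
        have hj₁k : (j₁ : ℝ) ≤ (k : ℝ) := by
          exact_mod_cast Nat.le_floor hj₁t
        have hrel' : relN (rel ω) n ((j₁ : ℝ) / n) (w (n * ((j₁ : ℝ) / n)))
            ((k : ℝ) / n) (w (n * ((k : ℝ) / n))) := by
          unfold relN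
          rw [hnk]
          exact hrel _ _ hpos₁ (by rw [hns₁]; exact hj₁k) (Nat.floor_le ht)
        have hkle : (k : ℝ) / n ≤ (j₂ : ℝ) / n := by
          apply div_le_div_of_nonneg_right ?_ hn0.le |>.trans le_rfl
          · calc (k : ℝ) ≤ t := Nat.floor_le ht
              _ ≤ (j₂ : ℝ) := by rw [← hns₂]; exact hA.le
        have hge : (j₁ : ℝ) / n ≤ (k : ℝ) / n :=
          div_le_div_of_nonneg_right hj₁k hn0.le
        have hδ'' : |(k : ℝ) / n - (j₁ : ℝ) / n| ≤ δ n ω := by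
          rw [abs_of_nonneg (by linarith), ]
          calc (k : ℝ) / n - (j₁ : ℝ) / n ≤ (j₂ : ℝ) / n - (j₁ : ℝ) / n := by linarith
            _ = |(j₂ : ℝ) / n - (j₁ : ℝ) / n| := (abs_of_nonneg (by linarith)).symm
            _ ≤ δ n ω := hδ'
        have hbound := hω.1 _ _ ⟨j₁, rfl⟩ ⟨k, rfl⟩ hδ'' _ _ hrel'
        have hwk : w (n * ((k : ℝ) / n)) = x := by rw [hnk]; exact hwfloor
        have hws₂ : w (n * ((j₂ : ℝ) / n)) = x := hend _ hA.le
        rw [hws₂, ← hwk, dE_comm]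
        refine hbound.trans ?_
        apply mul_le_mul_of_nonneg_left ?_ hC.le
        apply Real.rpow_le_rpow (abs_nonneg _) ?_ hα.1.le
        rw [abs_of_nonneg (by linarith), abs_of_nonneg (by linarith)]
        linarith
      · push_neg at hB
        have h₁ : w (n * ((j₁ : ℝ) / n)) = x := hend _ hB.le
        have h₂ : w (n * ((j₂ : ℝ) / n)) = x := hend _ hA.le
        rw [h₁, h₂, dE_self, zero_div]
        exact mul_nonneg hC.le (Real.rpow_nonneg (abs_nonneg _) α)
  -- part 2, for ordered real times
  have key2 : ∀ s₁ s₂ : ℝ, s₁ ≤ s₂ → 0 ≤ s₁ → 0 ≤ s₂ → |s₂ - s₁| ≤ δ n ω →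
      dE (w (n * s₂)) (w (n * s₁)) / Real.sqrt n ≤ C * (|s₂ - s₁| ^ α + n ^ (-α)) := by
    intro s₁ s₂ h12 h₁0 h₂0 hδ'
    have hpos₁ : 0 ≤ n * s₁ := mul_nonneg hn0.le h₁0
    have hmono : n * s₁ ≤ n * s₂ := mul_le_mul_of_nonneg_left h12 hn0.le
    by_cases hA : n * s₂ ≤ t
    · have hrel' : relN (rel ω) n s₁ (w (n * s₁)) s₂ (w (n * s₂)) :=
        hrel _ _ hpos₁ hmono hA
      have := hω.2 _ _ h₁0 h₂0 hδ' _ _ hrel'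
      rwa [dE_comm] at this
    · push_neg at hA
      by_cases hB : n * s₁ ≤ t
      · have hnt : n * (t / n) = t := by field_simp
        have hrel' : relN (rel ω) n s₁ (w (n * s₁)) (t / n) (w (n * (t / n))) := by
          unfold relN
          rw [hnt]
          exact hrel _ _ hpos₁ hB le_rfl
        have hs₁t : s₁ ≤ t / n := by
          rw [le_div_iff₀ hn0, mul_comm]; exact hB
        have hts₂ : t / n ≤ s₂ := by
          rw [div_le_iff₀ hn0, mul_comm]; exact hA.le
        have hδ'' : |t / n - s₁| ≤ δ n ω := by
          rw [abs_of_nonneg (by linarith)]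
          calc t / n - s₁ ≤ s₂ - s₁ := by linarith
            _ = |s₂ - s₁| := (abs_of_nonneg (by linarith)).symm
            _ ≤ δ n ω := hδ'
        have hbound := hω.2 _ _ h₁0 (le_trans h₁0 hs₁t) hδ'' _ _ hrel'
        have hwk : w (n * (t / n)) = x := by rw [hnt]; exact hwt
        have hws₂ : w (n * s₂) = x := hend _ hA.le
        rw [hws₂, ← hwk, dE_comm]
        refine hbound.trans ?_
        apply mul_le_mul_of_nonneg_left ?_ hC.le
        have : |t / n - s₁| ^ α ≤ |s₂ - s₁| ^ α := by
          apply Real.rpow_le_rpow (abs_nonneg _) ?_ hα.1.le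
          rw [abs_of_nonneg (by linarith), abs_of_nonneg (by linarith)]
          linarith
        linarith
      · push_neg at hB
        have h₁ : w (n * s₁) = x := hend _ hB.le
        have h₂ : w (n * s₂) = x := hend _ hA.le
        rw [h₁, h₂, dE_self, zero_div]
        exact mul_nonneg hC.le (add_nonneg (Real.rpow_nonneg (abs_nonneg _) α)
          (Real.rpow_nonneg hn0.le _))
  refine ⟨?_, ?_⟩
  · intro s₁ s₂ hg₁ hg₂ hδ'
    rcases le_total s₁ s₂ with h | h
    · exact key1 s₁ s₂ h hg₁ hg₂ hδ'
    · have := key1 s₂ s₁ h hg₂ hg₁ (by rwa [abs_sub_comm])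
      rwa [dE_comm, abs_sub_comm] at this
  · intro s₁ s₂ h₁0 h₂0 hδ'
    rcases le_total s₁ s₂ with h | h
    · exact key2 s₁ s₂ h h₁0 h₂0 hδ'
    · have := key2 s₂ s₁ h h₂0 h₁0 (by rwa [abs_sub_comm])
      rwa [dE_comm, abs_sub_comm] at this

end AncestralPaper
end
end

section
/- Let z > 0 with ρ_z ∈ (0,∞) and let 𝒯 have law P(𝒯 = T) = ρ_z^{−1}·W_z(T) on 𝕋_L(o). Then for all subsets A, B ⊆ 𝕋_L(o), all x ∈ ℤ^d and all n ≥ 1: P( x ∈ 𝒯_n, 𝒯_{≯x} ∈ A, R_x(𝒯) ∈ B_x ) ≤ ρ_z · P( x ∈ 𝒯_n, 𝒯_{≯x} ∈ A ) · P( 𝒯 ∈ B ). -/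
open scoped BigOperators ENNReal

noncomputable section

namespace LatticeTreePaper

/-- The canonical embedding of `ℤ^d` into Euclidean space `ℝ^d`. -/
def toE {d : ℕ} (x : ZLat d) : EuclideanSpace ℝ (Fin d) := WithLp.toLp 2 (fun i => ((x i : ℝ)))

/-- A path in the edge set `E` from `u` to `v`: a duplicate-free list of vertices starting
at `u`, ending at `v`, with consecutive vertices joined by edges of `E`. -/
def IsTreePath {d : ℕ} (E : Set (Sym2 (ZLat d))) (u v : ZLat d) (p : List (ZLat d)) : Prop :=
  p.Nodup ∧ p.head? = some u ∧ p.getLast? = some v ∧ p.Chain' (fun a b => s(a, b) ∈ E)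

/-- A lattice tree in `ℤ^d`: a finite simple graph on lattice vertices, connected and
cycle-free (equivalently, with a unique path between any two of its vertices). -/
structure LTree (d : ℕ) where
  V : Finset (ZLat d)
  E : Finset (Sym2 (ZLat d))
  edge_sub : ∀ e ∈ E, ∀ v ∈ e, v ∈ V
  loopless : ∀ e ∈ E, ¬ e.IsDiag
  unique_path : ∀ u ∈ V, ∀ v ∈ V,
    ∃! p : List (ZLat d), IsTreePath (E : Set (Sym2 (ZLat d))) u v p

/-- The generation-`n` vertices `T_n` of a lattice tree: vertices at tree distance `n`
from the origin. -/
def gen {d : ℕ} (T : LTree d) (n : ℕ) : Set (ZLat d) :=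
  {x | x ∈ T.V ∧ ∃ p : List (ZLat d),
    IsTreePath (T.E : Set (Sym2 (ZLat d))) 0 x p ∧ p.length = n + 1}

/-- `𝕋_L(x)`: the lattice trees containing the vertex `x` all of whose edges have
`L∞`-length at most `L`. -/
def TLset {d : ℕ} (L : ℕ) (x : ZLat d) : Set (LTree d) :=
  {T | x ∈ T.V ∧ ∀ a b : ZLat d, s(a, b) ∈ T.E → ∀ i, (a i - b i).natAbs ≤ L}

/-- The uniform step distribution `D` on `([−L,L]^d ∩ ℤ^d) \ {o}`. -/
def Dunif (d L : ℕ) (x : ZLat d) : ℝ :=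
  if x ≠ 0 ∧ ∀ i, (x i).natAbs ≤ L then (((2 * L + 1) ^ d - 1 : ℕ) : ℝ)⁻¹ else 0

lemma Dunif_neg (d L : ℕ) (x : ZLat d) : Dunif d L (-x) = Dunif d L x := by
  simp [Dunif, neg_ne_zero, Pi.neg_apply, Int.natAbs_neg]

/-- The weight `D(u − v)` of an (unordered) edge. -/
def edgeWeight (d L : ℕ) : Sym2 (ZLat d) → ℝ :=
  Sym2.lift ⟨fun a b => Dunif d L (a - b), fun a b => by
    show Dunif d L (a - b) = Dunif d L (b - a)
    rw [show a - b = -(b - a) by ring, Dunif_neg]⟩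

/-- The weight `W_z(T) = z^{|E(T)|} · ∏_{e ∈ E(T)} D(e)` of a lattice tree. -/
def W {d : ℕ} (L : ℕ) (z : ℝ) (T : LTree d) : ℝ :=
  z ^ T.E.card * ∏ e ∈ T.E, edgeWeight d L e

/-- `ρ_z = Σ_{T ∈ 𝕋_L(o)} W_z(T)`, as a sum of nonnegative terms in `[0,∞]`. -/
def rho (d L : ℕ) (z : ℝ) : ℝ≥0∞ :=
  ∑' T : (TLset (d := d) L 0), ENNReal.ofReal (W L z (T : LTree d))

/-- The law of the random lattice tree: `Pr(A) = ρ_z⁻¹ Σ_{T ∈ 𝕋_L(o) ∩ A} W_z(T)`. -/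
def Pr (d L : ℕ) (z : ℝ) (A : Set (LTree d)) : ℝ≥0∞ :=
  (∑' T : (TLset (d := d) L 0 ∩ A : Set (LTree d)), ENNReal.ofReal (W L z (T : LTree d)))
    / rho d L z


/-- The set of descendants of `x` in `T` (including `x` itself): the vertices whose unique
tree path from the origin passes through `x`. -/
def descV {d : ℕ} (T : LTree d) (x : ZLat d) : Set (ZLat d) :=
  {y | y ∈ T.V ∧ ∀ p : List (ZLat d), IsTreePath (T.E : Set (Sym2 (ZLat d))) 0 y p → x ∈ p}

/-- `R` is the subgraph of `T` induced on the vertex set `S` (its vertex set is `S`, its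
edges are the edges of `T` with both endpoints in `S`). -/
def IsSubtreeOn {d : ℕ} (T : LTree d) (S : Set (ZLat d)) (R : LTree d) : Prop :=
  (R.V : Set (ZLat d)) = S ∧
  (R.E : Set (Sym2 (ZLat d))) = {e | e ∈ T.E ∧ ∀ v ∈ e, v ∈ S}

/-- `T'` is the translate of `T` by `x`. -/
def IsTranslate {d : ℕ} (x : ZLat d) (T T' : LTree d) : Prop :=
  (T'.V : Set (ZLat d)) = (fun v => v + x) '' (T.V : Set (ZLat d)) ∧
  (T'.E : Set (Sym2 (ZLat d))) =
    Sym2.map (fun v => v + x) '' (T.E : Set (Sym2 (ZLat d)))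

section Paths
variable {d : ℕ}

lemma isTreePath_singleton (E : Set (Sym2 (ZLat d))) (u : ZLat d) :
    IsTreePath E u u [u] := ⟨List.nodup_singleton u, rfl, rfl, List.isChain_singleton u⟩

lemma prefix_path {E : Set (Sym2 (ZLat d))} {u v : ZLat d} {p : List (ZLat d)}
    (h : IsTreePath E u v p) {w : ZLat d} (hw : w ∈ p) :
    ∃ q₁ q₂, p = q₁ ++ w :: q₂ ∧ IsTreePath E u w (q₁ ++ [w]) := by
  obtain ⟨q₁, q₂, rfl⟩ := List.append_of_mem hw
  refine ⟨q₁, q₂, rfl, ?_, ?_, List.getLast?_concat, ?_⟩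
  · exact h.1.sublist ((List.cons_sublist_cons.2 (List.nil_sublist _)).append_left _)
  · cases q₁ <;> simpa using h.2.1
  · have hc := h.2.2.2
    unfold List.Chain' at hc ⊢; rw [List.isChain_append] at hc ⊢
    refine ⟨hc.1, List.isChain_singleton _, fun a ha b hb => ?_⟩
    simp only [List.head?_cons, Option.mem_def, Option.some.injEq] at hb
    subst hb
    exact hc.2.2 a ha w rfl

lemma path_concat {E : Set (Sym2 (ZLat d))} {u v : ZLat d} {p : List (ZLat d)}
    (h : IsTreePath E u v p) {w : ZLat d} (hw : w ∉ p) (he : s(v, w) ∈ E) :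
    IsTreePath E u w (p ++ [w]) := by
  refine ⟨?_, ?_, List.getLast?_concat, ?_⟩
  · exact h.1.append (List.nodup_singleton w) (by simpa using hw)
  · rw [List.head?_append, h.2.1]; rfl
  · unfold List.Chain'; rw [List.isChain_append]
    refine ⟨h.2.2.2, List.isChain_singleton _, fun a ha b hb => ?_⟩
    simp only [List.head?_cons, Option.mem_def, Option.some.injEq] at hb
    have ha' : a = v := by rw [h.2.2.1] at ha; exact (Option.some_inj.1 ha).symm
    subst hb; subst ha'
    exact he
  
end Paths

section Struct
variable {d : ℕ}

lemma chain'_mem_imp {α : Type*} {r s : α → α → Prop} :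
    ∀ {p : List α}, p.Chain' r → (∀ a ∈ p, ∀ b ∈ p, r a b → s a b) → p.Chain' s
  | [], _, _ => List.isChain_nil
  | [_], _, _ => List.isChain_singleton _
  | a :: b :: t, h, hm => by
    unfold List.Chain' at h ⊢; rw [List.isChain_cons_cons] at h ⊢
    exact ⟨hm a (by simp) b (by simp) h.1,
      chain'_mem_imp h.2 (fun c hc e he hr => hm c (by simp [hc]) e (by simp [he]) hr)⟩

lemma gen_ne_zero {T : LTree d} {x : ZLat d} {n : ℕ} (hn : 1 ≤ n) (hx : x ∈ gen T n) :
    x ≠ 0 := by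
  obtain ⟨hxV, p, hp, hlen⟩ := hx
  rintro rfl
  match p, hp, hlen with
  | [], ⟨_, h, _⟩, _ => simp at h
  | [a], _, hlen => simp at hlen; omega
  | a :: b :: t, hp, _ =>
    have ha : a = 0 := by simpa using hp.2.1
    have h0 : (0 : ZLat d) ∈ b :: t := by
      apply List.mem_of_getLast?
      have := hp.2.2.1
      rwa [List.getLast?_cons_cons] at this
    have := hp.1
    rw [List.nodup_cons] at this
    exact this.1 (ha ▸ h0)

lemma x_mem_descV {T : LTree d} {x : ZLat d} (hxV : x ∈ T.V) : x ∈ descV T x :=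
  ⟨hxV, fun p hp => List.mem_of_getLast? hp.2.2.1⟩

lemma nondesc_witness {T : LTree d} {x u : ZLat d} (huV : u ∈ T.V) (hu : u ∉ descV T x) :
    ∃ q, IsTreePath (T.E : Set (Sym2 (ZLat d))) 0 u q ∧ x ∉ q := by
  by_contra h
  push_neg at h
  exact hu ⟨huV, fun p hp => h p hp⟩

/-- Every vertex on a tree path from the origin which avoids `x` (except possibly as the
final vertex) is a non-descendant of `x` and lies in `T.V`. -/
lemma mem_path_nondesc {T : LTree d} {x : ZLat d} (h0 : (0 : ZLat d) ∈ T.V)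
    {v w : ZLat d} {p : List (ZLat d)}
    (hp : IsTreePath (T.E : Set (Sym2 (ZLat d))) 0 v p) (hw : w ∈ p)
    (hxw : x ∉ p ∨ (w ≠ x ∧ p.getLast? = some x)) :
    w ∈ T.V ∧ w ∉ descV T x := by
  obtain ⟨q₁, q₂, hsplit, hq⟩ := prefix_path hp hw
  have hxq : x ∉ q₁ ++ [w] := by
    rcases hxw with hxp | ⟨hne, hlast⟩
    · intro hx
      apply hxp
      rw [hsplit]
      rcases List.mem_append.1 hx with h | h
      · exact List.mem_append.2 (Or.inl h)
      · simp only [List.mem_singleton] at h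
        subst h; exact List.mem_append.2 (Or.inr (by simp))
    · intro hx
      have hx1 : x ∈ q₁ := by
        rcases List.mem_append.1 hx with h | h
        · exact h
        · simp only [List.mem_singleton] at h; exact absurd h.symm hne
      have hx2 : x ∈ w :: q₂ := by
        have h5 : (q₁ ++ w :: q₂).getLast? = some x := hsplit ▸ hlast
        rw [List.getLast?_append_of_ne_nil _ (by simp)] at h5
        exact List.mem_of_getLast? h5
      have hnd := hp.1
      rw [hsplit] at hnd
      exact List.disjoint_of_nodup_append hnd hx1 hx2
  have hwV : w ∈ T.V := by
    cases q₁ with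
    | nil =>
      have : w = 0 := by simpa using hq.2.1
      rw [this]; exact h0
    | cons a t =>
      have hch := hq.2.2.2
      unfold List.Chain' at hch; rw [List.isChain_append] at hch
      have he : s((a :: t).getLast (by simp), w) ∈ (T.E : Set (Sym2 (ZLat d))) :=
        hch.2.2 _ (List.getLast_mem_getLast? (by simp)) w rfl
      exact T.edge_sub _ he w (Sym2.mem_mk_right _ _)
  exact ⟨hwV, fun hdesc => hxq (hdesc.2 _ hq)⟩

end Struct

section Sub
variable {d : ℕ} {T : LTree d} {x : ZLat d}

lemma desc_adj (h0 : (0 : ZLat d) ∈ T.V) {u v : ZLat d}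
    (hud : u ∈ descV T x) (hv : v ∈ T.V) (hvd : v ∉ descV T x)
    (he : s(u, v) ∈ T.E) : u = x := by
  by_contra hne
  obtain ⟨q, hq, hxq⟩ := nondesc_witness hv hvd
  by_cases huq : u ∈ q
  · exact (mem_path_nondesc h0 hq huq (Or.inl hxq)).2 hud
  · have hpath : IsTreePath (T.E : Set (Sym2 (ZLat d))) 0 u (q ++ [u]) :=
      path_concat hq huq (by rwa [Sym2.eq_swap])
    have hx : x ∈ q ++ [u] := hud.2 _ hpath
    rcases List.mem_append.1 hx with h | h
    · exact hxq h
    · simp only [List.mem_singleton] at h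
      exact hne h.symm

lemma edge_dichotomy (h0 : (0 : ZLat d) ∈ T.V) :
    ∀ e ∈ T.E, (∀ v ∈ e, v ∈ ((T.V : Set (ZLat d)) \ descV T x) ∪ {x}) ∨
      (∀ v ∈ e, v ∈ descV T x) := by
  intro e he
  induction e using Sym2.ind with
  | _ u v =>
    have hu : u ∈ T.V := T.edge_sub _ he u (Sym2.mem_mk_left _ _)
    have hv : v ∈ T.V := T.edge_sub _ he v (Sym2.mem_mk_right _ _)
    have hmem : ∀ w, w ∈ s(u, v) → w = u ∨ w = v := fun w hw => Sym2.mem_iff.1 hw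
    by_cases hud : u ∈ descV T x <;> by_cases hvd : v ∈ descV T x
    · exact Or.inr (fun w hw => by rcases hmem w hw with rfl | rfl <;> assumption)
    · have hux : u = x := desc_adj h0 hud hv hvd he
      refine Or.inl (fun w hw => ?_)
      rcases hmem w hw with rfl | rfl
      · exact Or.inr (by simp [hux])
      · exact Or.inl ⟨hv, hvd⟩
    · have hvx : v = x := desc_adj h0 hvd hu hud (by rwa [Sym2.eq_swap])
      refine Or.inl (fun w hw => ?_)
      rcases hmem w hw with rfl | rfl
      · exact Or.inl ⟨hu, hud⟩
      · exact Or.inr (by simp [hvx])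
    · exact Or.inl (fun w hw => by
        rcases hmem w hw with rfl | rfl
        · exact Or.inl ⟨hu, hud⟩
        · exact Or.inl ⟨hv, hvd⟩)

lemma lift_path {R : LTree d}
    (hR : IsSubtreeOn T (((T.V : Set (ZLat d)) \ descV T x) ∪ {x}) R)
    {w : ZLat d} {q : List (ZLat d)} (hq : IsTreePath (T.E : Set (Sym2 (ZLat d))) 0 w q)
    (hvert : ∀ a ∈ q, a ∈ ((T.V : Set (ZLat d)) \ descV T x) ∪ {x}) :
    IsTreePath (R.E : Set (Sym2 (ZLat d))) 0 w q := by
  refine ⟨hq.1, hq.2.1, hq.2.2.1, chain'_mem_imp hq.2.2.2 (fun a ha b hb hr => ?_)⟩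
  rw [hR.2]
  exact ⟨hr, fun v hv => by
    rcases Sym2.mem_iff.1 hv with rfl | rfl
    · exact hvert _ ha
    · exact hvert _ hb⟩

lemma nondesc_in_R (h0 : (0 : ZLat d) ∈ T.V) {R : LTree d}
    (hR : IsSubtreeOn T (((T.V : Set (ZLat d)) \ descV T x) ∪ {x}) R)
    {w : ZLat d} (hw : w ∈ T.V) (hwd : w ∉ descV T x) : w ∉ descV R x := by
  obtain ⟨q, hq, hxq⟩ := nondesc_witness hw hwd
  have hvert : ∀ a ∈ q, a ∈ ((T.V : Set (ZLat d)) \ descV T x) ∪ {x} := fun a ha =>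
    Or.inl ⟨(mem_path_nondesc h0 hq ha (Or.inl hxq)).1,
      (mem_path_nondesc h0 hq ha (Or.inl hxq)).2⟩
  intro hdesc
  exact hxq (hdesc.2 _ (lift_path hR hq hvert))

lemma R_props {L n : ℕ} (hn : 1 ≤ n) (hK : T ∈ TLset L 0) (hgen : x ∈ gen T n)
    {R : LTree d} (hR : IsSubtreeOn T (((T.V : Set (ZLat d)) \ descV T x) ∪ {x}) R) :
    R ∈ TLset L 0 ∧ x ∈ gen R n ∧
      IsSubtreeOn R (((R.V : Set (ZLat d)) \ descV R x) ∪ {x}) R := by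
  have h0 : (0 : ZLat d) ∈ T.V := hK.1
  have hx0 : x ≠ 0 := gen_ne_zero hn hgen
  have hxV : x ∈ T.V := hgen.1
  have hxR : x ∈ R.V := by
    rw [← Finset.mem_coe, hR.1]; exact Or.inr rfl
  have h0d : (0 : ZLat d) ∉ descV T x := by
    intro h
    have hx1 : x ∈ [(0 : ZLat d)] := h.2 _ (isTreePath_singleton _ 0)
    exact hx0 (by simpa using hx1)
  have h0R : (0 : ZLat d) ∈ R.V := by
    rw [← Finset.mem_coe, hR.1]; exact Or.inl ⟨h0, h0d⟩
  have hEsub : ∀ e ∈ R.E, e ∈ T.E := fun e he => by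
    have : e ∈ (R.E : Set (Sym2 (ZLat d))) := he
    rw [hR.2] at this; exact this.1
  refine ⟨⟨h0R, fun a b hab i => hK.2 a b (hEsub _ hab) i⟩, ?_, ?_⟩
  · -- x ∈ gen R n
    obtain ⟨p, hp, hlen⟩ := hgen.2
    have hvert : ∀ a ∈ p, a ∈ ((T.V : Set (ZLat d)) \ descV T x) ∪ {x} := by
      intro a ha
      by_cases hax : a = x
      · exact Or.inr hax
      · exact Or.inl ⟨(mem_path_nondesc h0 hp ha (Or.inr ⟨hax, hp.2.2.1⟩)).1,
          (mem_path_nondesc h0 hp ha (Or.inr ⟨hax, hp.2.2.1⟩)).2⟩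
    exact ⟨hxR, p, lift_path hR hp hvert, hlen⟩
  · -- self subtree
    have hset : ((R.V : Set (ZLat d)) \ descV R x) ∪ {x} = (R.V : Set (ZLat d)) := by
      apply Set.Subset.antisymm
      · rintro w (⟨hw, -⟩ | hw)
        · exact hw
        · simp only [Set.mem_singleton_iff] at hw; subst hw; exact hxR
      · intro w hw
        by_cases hwx : w = x
        · exact Or.inr hwx
        · have hwS : w ∈ ((T.V : Set (ZLat d)) \ descV T x) ∪ {x} := by rw [← hR.1]; exact hw
          rcases hwS with ⟨hw1, hw2⟩ | hwx'
          · exact Or.inl ⟨hw, nondesc_in_R h0 hR hw1 hw2⟩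
          · exact absurd hwx' hwx
    rw [hset]
    exact ⟨rfl, Set.ext fun e => ⟨fun he => ⟨he, fun v hv => R.edge_sub e he v hv⟩,
      fun h => h.1⟩⟩

end Sub

section Weights
variable {d : ℕ} {T : LTree d} {x : ZLat d}

lemma LTree.ext' {T₁ T₂ : LTree d} (h1 : T₁.V = T₂.V) (h2 : T₁.E = T₂.E) : T₁ = T₂ := by
  cases T₁; cases T₂; dsimp at h1 h2; subst h1; subst h2; rfl

lemma decomp_E {n : ℕ} (hn : 1 ≤ n) (h0 : (0 : ZLat d) ∈ T.V) (hgen : x ∈ gen T n)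
    {R R' : LTree d}
    (hR : IsSubtreeOn T (((T.V : Set (ZLat d)) \ descV T x) ∪ {x}) R)
    (hR' : IsSubtreeOn T (descV T x) R') :
    T.E = R.E ∪ R'.E ∧ Disjoint R.E R'.E ∧
      (T.V : Set (ZLat d)) = (R.V : Set (ZLat d)) ∪ (R'.V : Set (ZLat d)) := by
  have hx0 : x ≠ 0 := gen_ne_zero hn hgen
  have hxV : x ∈ T.V := hgen.1
  have hxd : x ∈ descV T x := x_mem_descV hxV
  have hinter : ∀ w, w ∈ ((T.V : Set (ZLat d)) \ descV T x) ∪ {x} → w ∈ descV T x → w = x := by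
    rintro w (⟨-, hw2⟩ | hw) hwd
    · exact absurd hwd hw2
    · exact hw
  constructor
  · apply Finset.coe_injective
    rw [Finset.coe_union, hR.2, hR'.2]
    apply Set.Subset.antisymm
    · intro e he
      rcases edge_dichotomy h0 e he with h | h
      · exact Or.inl ⟨he, h⟩
      · exact Or.inr ⟨he, h⟩
    · rintro e (⟨he, -⟩ | ⟨he, -⟩) <;> exact he
  constructor
  · rw [Finset.disjoint_left]
    intro e heR heR'
    have h1 : e ∈ (R.E : Set (Sym2 (ZLat d))) := heR
    have h2 : e ∈ (R'.E : Set (Sym2 (ZLat d))) := heR'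
    rw [hR.2] at h1; rw [hR'.2] at h2
    induction e using Sym2.ind with
    | _ u v =>
      have hu : u = x := hinter u (h1.2 u (Sym2.mem_mk_left _ _)) (h2.2 u (Sym2.mem_mk_left _ _))
      have hv : v = x := hinter v (h1.2 v (Sym2.mem_mk_right _ _)) (h2.2 v (Sym2.mem_mk_right _ _))
      exact T.loopless _ h1.1 (by rw [hu, hv]; exact Sym2.mk_isDiag_iff.2 rfl)
  · rw [hR.1, hR'.1]
    apply Set.Subset.antisymm
    · intro w hw
      by_cases hwd : w ∈ descV T x
      · exact Or.inr hwd
      · exact Or.inl (Or.inl ⟨hw, hwd⟩)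
    · rintro w ((⟨hw, -⟩ | hw) | hw)
      · exact hw
      · simp only [Set.mem_singleton_iff] at hw; subst hw; exact hxV
      · exact hw.1

lemma edgeWeight_nonneg (d L : ℕ) (e : Sym2 (ZLat d)) : 0 ≤ edgeWeight d L e := by
  induction e using Sym2.ind with
  | _ a b =>
    show (0 : ℝ) ≤ Dunif d L (a - b)
    unfold Dunif
    split
    · positivity
    · exact le_refl 0
  
lemma W_nonneg {L : ℕ} {z : ℝ} (hz : 0 ≤ z) (T : LTree d) : 0 ≤ W L z T :=
  mul_nonneg (pow_nonneg hz _) (Finset.prod_nonneg fun e _ => edgeWeight_nonneg d L e)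

lemma W_mul {L : ℕ} {z : ℝ} {R R' : LTree d}
    (hu : T.E = R.E ∪ R'.E) (hd : Disjoint R.E R'.E) :
    W L z T = W L z R * W L z R' := by
  rw [W, W, W, hu, Finset.card_union_of_disjoint hd, Finset.prod_union hd, pow_add]
  ring

lemma W_translate {L : ℕ} {z : ℝ} {B₀ R' : LTree d} (h : IsTranslate x B₀ R') :
    W L z R' = W L z B₀ := by
  have finj : Function.Injective (fun v : ZLat d => v + x) := fun a b hab => by
    simpa using congrArg (fun v => v - x) hab
  have ginj : Function.Injective (Sym2.map (fun v : ZLat d => v + x)) :=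
    Sym2.map.injective finj
  have hE : R'.E = B₀.E.image (Sym2.map (fun v : ZLat d => v + x)) := by
    apply Finset.coe_injective
    rw [Finset.coe_image]
    exact h.2
  rw [W, W, hE, Finset.card_image_of_injective _ ginj,
    Finset.prod_image (fun a _ b _ hab => ginj hab)]
  congr 1
  apply Finset.prod_congr rfl
  intro e _
  induction e using Sym2.ind with
  | _ a b =>
    rw [Sym2.map_pair_eq]
    show Dunif d L ((a + x) - (b + x)) = Dunif d L (a - b)
    congr 1
    ring

end Weights

lemma Pr_le_aux {d L : ℕ} {z : ℝ} (hρ0 : rho d L z ≠ 0) (hρt : rho d L z ≠ ⊤)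
    {E E1 B : Set (LTree d)}
    (key : (∑' T : (TLset (d := d) L 0 ∩ E : Set (LTree d)), ENNReal.ofReal (W L z (T : LTree d)))
      ≤ (∑' T : (TLset (d := d) L 0 ∩ E1 : Set (LTree d)), ENNReal.ofReal (W L z (T : LTree d)))
        * (∑' T : (TLset (d := d) L 0 ∩ B : Set (LTree d)), ENNReal.ofReal (W L z (T : LTree d)))) :
    Pr d L z E ≤ rho d L z * Pr d L z E1 * Pr d L z B := by
  rw [Pr, Pr, Pr, ENNReal.mul_div_cancel hρ0 hρt, ← mul_div_assoc]
  exact ENNReal.div_le_div_right key _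

theorem statement16' {d : ℕ} (hd : 1 ≤ d) (L : ℕ) (hL : 1 ≤ L)
    (z : ℝ) (hz : 0 < z)
    (hρpos : 0 < rho d L z) (hρfin : rho d L z < ⊤)
    (A B : Set (LTree d)) (hA : A ⊆ TLset L 0) (hB : B ⊆ TLset L 0)
    (x : ZLat d) (n : ℕ) (hn : 1 ≤ n) :
    Pr d L z {T | x ∈ gen T n ∧
        (∃ R : LTree d,
          IsSubtreeOn T (((T.V : Set (ZLat d)) \ descV T x) ∪ {x}) R ∧ R ∈ A) ∧
        (∃ R' : LTree d,
          IsSubtreeOn T (descV T x) R' ∧ ∃ B₀ ∈ B, IsTranslate x B₀ R')}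
      ≤ rho d L z *
        Pr d L z {T | x ∈ gen T n ∧
          (∃ R : LTree d,
            IsSubtreeOn T (((T.V : Set (ZLat d)) \ descV T x) ∪ {x}) R ∧ R ∈ A)} *
        Pr d L z B := by
  classical
  set E : Set (LTree d) := {T | x ∈ gen T n ∧
        (∃ R : LTree d,
          IsSubtreeOn T (((T.V : Set (ZLat d)) \ descV T x) ∪ {x}) R ∧ R ∈ A) ∧
        (∃ R' : LTree d,
          IsSubtreeOn T (descV T x) R' ∧ ∃ B₀ ∈ B, IsTranslate x B₀ R')} with hE
  set E1 : Set (LTree d) := {T | x ∈ gen T n ∧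
          (∃ R : LTree d,
            IsSubtreeOn T (((T.V : Set (ZLat d)) \ descV T x) ∪ {x}) R ∧ R ∈ A)} with hE1
  apply Pr_le_aux hρpos.ne' hρfin.ne
  -- the decomposition map
  have exR : ∀ T : (TLset (d := d) L 0 ∩ E : Set (LTree d)),
      ∃ RB : LTree d × LTree d,
        (RB.1 ∈ TLset (d := d) L 0 ∩ E1) ∧ (RB.2 ∈ TLset (d := d) L 0 ∩ B) ∧
        W L z (T : LTree d) = W L z RB.1 * W L z RB.2 ∧
        ((T : LTree d).V : Set (ZLat d)) =
          (RB.1.V : Set (ZLat d)) ∪ ((fun v => v + x) '' (RB.2.V : Set (ZLat d))) ∧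
        ((T : LTree d).E : Set (Sym2 (ZLat d))) =
          (RB.1.E : Set (Sym2 (ZLat d))) ∪
            (Sym2.map (fun v => v + x) '' (RB.2.E : Set (Sym2 (ZLat d)))) := by
    rintro ⟨T, hKT, hgen, ⟨R, hR, hRA⟩, ⟨R', hR', B₀, hB₀B, htr⟩⟩
    obtain ⟨hRK, hRgen, hRself⟩ := R_props hn hKT hgen hR
    obtain ⟨hu, hdisj, hV⟩ := decomp_E hn hKT.1 hgen hR hR'
    refine ⟨(R, B₀), ⟨hRK, hRgen, R, hRself, hRA⟩, ⟨hB hB₀B, hB₀B⟩, ?_, ?_, ?_⟩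
    · rw [W_mul hu hdisj, W_translate htr]
    · rw [hV, htr.1]
    · rw [hu, Finset.coe_union, htr.2]
  choose φ hφ1 hφ2 hφ3 hφ4 hφ5 using exR
  set ψ : (TLset (d := d) L 0 ∩ E : Set (LTree d)) →
      (TLset (d := d) L 0 ∩ E1 : Set (LTree d)) × (TLset (d := d) L 0 ∩ B : Set (LTree d)) :=
    fun T => (⟨(φ T).1, hφ1 T⟩, ⟨(φ T).2, hφ2 T⟩) with hψ
  have hinj : Function.Injective ψ := by
    intro T T' h
    rw [hψ] at h
    simp only [Prod.mk.injEq, Subtype.mk.injEq] at h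
    have hVeq : ((T : LTree d).V : Set (ZLat d)) = ((T' : LTree d).V : Set (ZLat d)) := by
      rw [hφ4 T, hφ4 T', h.1, h.2]
    have hEeq : ((T : LTree d).E : Set (Sym2 (ZLat d))) = ((T' : LTree d).E : Set (Sym2 (ZLat d))) := by
      rw [hφ5 T, hφ5 T', h.1, h.2]
    exact Subtype.ext (LTree.ext' (Finset.coe_injective hVeq) (Finset.coe_injective hEeq))
  calc (∑' T : (TLset (d := d) L 0 ∩ E : Set (LTree d)), ENNReal.ofReal (W L z (T : LTree d)))
      = ∑' T : (TLset (d := d) L 0 ∩ E : Set (LTree d)),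
          (ENNReal.ofReal (W L z ((ψ T).1 : LTree d)) * ENNReal.ofReal (W L z ((ψ T).2 : LTree d))) := by
        apply tsum_congr
        intro T
        rw [← ENNReal.ofReal_mul (W_nonneg hz.le _)]
        congr 1
        exact hφ3 T
    _ ≤ ∑' p : ((TLset (d := d) L 0 ∩ E1 : Set (LTree d)) × (TLset (d := d) L 0 ∩ B : Set (LTree d))),
          (ENNReal.ofReal (W L z (p.1 : LTree d)) * ENNReal.ofReal (W L z (p.2 : LTree d))) :=
        ENNReal.tsum_comp_le_tsum_of_injective hinj _
    _ = (∑' T : (TLset (d := d) L 0 ∩ E1 : Set (LTree d)), ENNReal.ofReal (W L z (T : LTree d)))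
        * (∑' T : (TLset (d := d) L 0 ∩ B : Set (LTree d)), ENNReal.ofReal (W L z (T : LTree d))) := by
        rw [ENNReal.tsum_prod (f := fun (a : (TLset (d := d) L 0 ∩ E1 : Set (LTree d)))
            (b : (TLset (d := d) L 0 ∩ B : Set (LTree d))) =>
            ENNReal.ofReal (W L z (a : LTree d)) * ENNReal.ofReal (W L z (b : LTree d)))]
        simp_rw [ENNReal.tsum_mul_left]
        rw [ENNReal.tsum_mul_right]

/-- Lemma `basictreebounds`: for the random lattice tree `𝒯` with law
`P(𝒯 = T) = ρ_z⁻¹ W_z(T)` on `𝕋_L(o)`, for all `A, B ⊆ 𝕋_L(o)`, all `x` and `n ≥ 1`: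
`P(x ∈ 𝒯_n, 𝒯_{≯x} ∈ A, R_x(𝒯) ∈ B_x) ≤ ρ_z · P(x ∈ 𝒯_n, 𝒯_{≯x} ∈ A) · P(𝒯 ∈ B)`. -/
theorem statement16 {d : ℕ} (hd : 1 ≤ d) (L : ℕ) (hL : 1 ≤ L)
    (z : ℝ) (hz : 0 < z)
    (hρpos : 0 < rho d L z) (hρfin : rho d L z < ⊤)
    (A B : Set (LTree d)) (hA : A ⊆ TLset L 0) (hB : B ⊆ TLset L 0)
    (x : ZLat d) (n : ℕ) (hn : 1 ≤ n) :
    Pr d L z {T | x ∈ gen T n ∧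
        (∃ R : LTree d,
          IsSubtreeOn T (((T.V : Set (ZLat d)) \ descV T x) ∪ {x}) R ∧ R ∈ A) ∧
        (∃ R' : LTree d,
          IsSubtreeOn T (descV T x) R' ∧ ∃ B₀ ∈ B, IsTranslate x B₀ R')}
      ≤ rho d L z *
        Pr d L z {T | x ∈ gen T n ∧
          (∃ R : LTree d,
            IsSubtreeOn T (((T.V : Set (ZLat d)) \ descV T x) ∪ {x}) R ∧ R ∈ A)} *
        Pr d L z B :=
  statement16' hd L hL z hz hρpos hρfin A B hA hB x n hn

end LatticeTreePaper
end
end
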